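/- arXiv:1901.04317 — 9 statements merged into one kernel-verified Lean document; each statement's English description precedes it below -/
import Mathlib

section
/- Let (Ω,d) be a metric space, ι a nonempty directed set, Ĝ : ι → 𝔒 a net of open subsets of Ω, and g : (0,∞) → 𝔒 a function such that for every t > 0 the net α ↦ Ĝ_α^t order-converges in the lattice 𝔒 of open sets to g(t) (i.e. ⨆_α ⨅_{β ≥ α} Ĝ_β^t = ⨅_α ⨆_{β ≥ α} Ĝ_β^t = g(t)). Define G_α := ⋃_{β ≥ α} Ĝ_β. Then (G_α) is a decreasing net of open sets, g is a growing function (g(s) ⊆ g(t) whenever 0 < s ≤ t), and g(t) = int ⋂_α G_α^t for every t > 0. -/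
open Metric TopologicalSpace

/-- If a net of thickenings of open sets order-converges (in the lattice of open sets,
where sup is union and inf is interior of intersection) pointwise in `t` to `g t`,
then the net `G α = ⋃ β ≥ α, Ghat β` is decreasing, `g` is a growing function, and
`g t = int ⋂ α (G α)^t` for every `t > 0`. -/
theorem limit_of_isotony_net
    {Ω : Type*} [MetricSpace Ω]
    {ι : Type*} [Nonempty ι] [Preorder ι] [IsDirected ι (· ≤ ·)]
    (Ghat : ι → Set Ω) (hGhat : ∀ α, IsOpen (Ghat α))
    (g : ℝ → Set Ω)
    (hsup : ∀ t > (0:ℝ),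
      (⋃ α, interior (⋂ β, ⋂ _ : α ≤ β, Metric.thickening t (Ghat β))) = g t)
    (hinf : ∀ t > (0:ℝ),
      interior (⋂ α, ⋃ β, ⋃ _ : α ≤ β, Metric.thickening t (Ghat β)) = g t)
    (G : ι → Set Ω) (hG : ∀ α, G α = ⋃ β, ⋃ _ : α ≤ β, Ghat β) :
    Antitone G ∧
    (∀ s t : ℝ, 0 < s → s ≤ t → g s ⊆ g t) ∧
    (∀ t > (0:ℝ), g t = interior (⋂ α, Metric.thickening t (G α))) := by
  refine ⟨?_, ?_, ?_⟩
  · intro a b hab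
    rw [hG a, hG b]
    exact Set.iUnion₂_subset fun β hβ => Set.subset_iUnion₂ (s := fun β (_ : a ≤ β) => Ghat β) β (hab.trans hβ)
  · intro s t hs hst
    rw [← hsup s hs, ← hsup t (lt_of_lt_of_le hs hst)]
    refine Set.iUnion_mono fun α => interior_mono (Set.iInter₂_mono fun β _ => ?_)
    exact Metric.thickening_mono hst _
  · intro t ht
    rw [← hinf t ht]
    refine congrArg interior ?_
    refine Set.iInter_congr fun α => ?_
    rw [hG α]
    ext x
    simp only [Set.mem_iUnion, Metric.mem_thickening_iff, exists_prop]
    aesop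
end

section
/- Let (Ω,d) be a metric space, ι a nonempty directed set, and (G_α)_{α∈ι} a decreasing (antitone) family of open subsets of Ω. Define g(t) := int ⋂_α G_α^t for t > 0. Then ⋂_{t>0} g(t) = ⋂_{t>0} closure(g(t)) = ⋂_α closure(G_α). -/
open Metric

/-- Lemma 1: for a decreasing net of open sets `G α` and
`g t = int ⋂ α (G α)^t`, one has
`⋂_{t>0} g t = ⋂_{t>0} closure (g t) = ⋂ α closure (G α)`. -/
theorem nucleus_eq_inter_closures
    {Ω : Type*} [MetricSpace Ω]
    {ι : Type*} [Nonempty ι] [Preorder ι] [IsDirected ι (· ≤ ·)]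
    (G : ι → Set Ω) (hG : ∀ α, IsOpen (G α)) (hanti : Antitone G)
    (g : ℝ → Set Ω)
    (hg : ∀ t > (0:ℝ), g t = interior (⋂ α, Metric.thickening t (G α))) :
    (⋂ t > (0:ℝ), g t) = (⋂ t > (0:ℝ), closure (g t)) ∧
    (⋂ t > (0:ℝ), g t) = ⋂ α, closure (G α) := by
  -- key : the main equality
  have key : (⋂ t > (0:ℝ), g t) = ⋂ α, closure (G α) := by
    apply Set.Subset.antisymm
    · intro x hx
      simp only [Set.mem_iInter] at hx ⊢
      intro α
      rw [Metric.closure_eq_iInter_thickening]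
      simp only [Set.mem_iInter]
      intro t ht
      have := hx t ht
      rw [hg t ht] at this
      exact Set.mem_iInter.1 (interior_subset this) α
    · intro x hx
      simp only [Set.mem_iInter] at hx ⊢
      intro t ht
      rw [hg t ht]
      have hball : Metric.ball x (t/2) ⊆ ⋂ α, Metric.thickening t (G α) := by
        intro y hy
        simp only [Set.mem_iInter]
        intro α
        rw [Metric.mem_thickening_iff_infEdist_lt]
        have h0 : EMetric.infEdist x (G α) = 0 :=
          EMetric.mem_closure_iff_infEdist_zero.1 (hx α)
        calc EMetric.infEdist y (G α)
            ≤ EMetric.infEdist x (G α) + edist y x :=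
              EMetric.infEdist_le_infEdist_add_edist
          _ = edist y x := by rw [h0, zero_add]
          _ < ENNReal.ofReal t := by
              rw [edist_dist]
              exact ENNReal.ofReal_lt_ofReal_iff ht |>.2 (by
                have := Metric.mem_ball.1 hy
                rw [dist_comm] at this ⊢
                linarith)
      exact mem_interior.2 ⟨Metric.ball x (t/2), hball, isOpen_ball,
        mem_ball_self (by linarith)⟩
  -- closures intersection
  have key2 : (⋂ t > (0:ℝ), closure (g t)) = ⋂ α, closure (G α) := by
    apply Set.Subset.antisymm
    · intro x hx
      simp only [Set.mem_iInter] at hx ⊢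
      intro α
      rw [Metric.closure_eq_iInter_cthickening]
      simp only [Set.mem_iInter]
      intro t ht
      have h1 : closure (g t) ⊆ Metric.cthickening t (G α) := by
        rw [hg t ht]
        refine (closure_mono ?_).trans (Metric.closure_thickening_subset_cthickening t (G α))
        exact interior_subset.trans (Set.iInter_subset _ α)
      exact h1 (hx t ht)
    · rw [← key]
      exact Set.iInter₂_mono fun t ht => subset_closure
  exact ⟨key.trans key2.symm, key⟩
end

section
/- Let (Ω,d) be a proper metric space (every closed ball is compact), ι a nonempty directed set, and (G_α)_{α∈ι} a decreasing (antitone) family of open subsets of Ω. Define g(t) := int ⋂_α G_α^t for t > 0. If g(t) is nonempty for some t > 0, then the nucleus ⋂_α closure(G_α) is nonempty. -/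
open Metric

/-- Lemma 2: in a proper metric space, if `g t = int ⋂ α (G α)^t` is nonempty for
some `t > 0`, then the nucleus `⋂ α closure (G α)` is nonempty. -/
theorem nucleus_nonempty_of_proper
    {Ω : Type*} [MetricSpace Ω] [ProperSpace Ω]
    {ι : Type*} [Nonempty ι] [Preorder ι] [IsDirected ι (· ≤ ·)]
    (G : ι → Set Ω) (hG : ∀ α, IsOpen (G α)) (hanti : Antitone G)
    (g : ℝ → Set Ω)
    (hg : ∀ t > (0:ℝ), g t = interior (⋂ α, Metric.thickening t (G α)))
    (hne : ∃ t > (0:ℝ), (g t).Nonempty) :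
    (⋂ α, closure (G α)).Nonempty := by
  obtain ⟨t, ht, x, hx⟩ := hne
  rw [hg t ht] at hx
  have hx' : ∀ α, x ∈ Metric.thickening t (G α) := by
    intro α
    have := interior_subset hx
    exact Set.mem_iInter.mp this α
  set K : ι → Set Ω := fun α => closure (G α) ∩ closedBall x t with hK
  have hdir : Directed (· ⊇ ·) K := by
    intro α β
    obtain ⟨γ, hγα, hγβ⟩ := directed_of (· ≤ ·) α β
    exact ⟨γ, Set.inter_subset_inter_left _ (closure_mono (hanti hγα)),
      Set.inter_subset_inter_left _ (closure_mono (hanti hγβ))⟩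
  have hnon : ∀ α, (K α).Nonempty := by
    intro α
    obtain ⟨y, hy, hdy⟩ := Metric.mem_thickening_iff.mp (hx' α)
    exact ⟨y, subset_closure hy, by
      rw [Metric.mem_closedBall, dist_comm]; exact hdy.le⟩
  have hcl : ∀ α, IsClosed (K α) := fun α =>
    isClosed_closure.inter Metric.isClosed_closedBall
  have hcpt : ∀ α, IsCompact (K α) := fun α =>
    (isCompact_closedBall x t).inter_left isClosed_closure
  have := IsCompact.nonempty_iInter_of_directed_nonempty_isCompact_isClosed
    K hdir hnon hcpt hcl
  obtain ⟨z, hz⟩ := this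
  exact ⟨z, Set.mem_iInter.mpr fun α => (Set.mem_iInter.mp hz α).1⟩
end

section
/- Let (Ω,d) be a metric space satisfying Condition 2: for all x,y ∈ Ω and r,s > 0, if the open balls B_r(x) and B_s(y) are disjoint then d(x,y) ≥ r + s. Then for every subset A ⊆ Ω and all r,s > 0 one has (A^r)^s = A^{r+s}, i.e. Metric.thickening (Metric.thickening A r) s = Metric.thickening A (r+s). -/
open Metric

/-- Under Condition 2 thickenings form a semigroup: `(A^r)^s = A^{r+s}`. -/
theorem thickening_thickening_of_cond2
    {Ω : Type*} [MetricSpace Ω]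
    (cond2 : ∀ x y : Ω, ∀ r s : ℝ, 0 < r → 0 < s →
      Metric.ball x r ∩ Metric.ball y s = ∅ → r + s ≤ dist x y)
    (A : Set Ω) (r s : ℝ) (hr : 0 < r) (hs : 0 < s) :
    Metric.thickening s (Metric.thickening r A) = Metric.thickening (r + s) A := by
  apply le_antisymm
  · have := Metric.thickening_thickening_subset s r A
    rwa [add_comm] at this
  · intro x hx
    rw [Metric.mem_thickening_iff] at hx
    obtain ⟨a, ha, hd⟩ := hx
    rw [Metric.mem_thickening_iff]
    by_contra h
    push_neg at h
    have hdisj : Metric.ball x s ∩ Metric.ball a r = ∅ := by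
      ext y
      simp only [Set.mem_inter_iff, Metric.mem_ball, Set.mem_empty_iff_false, iff_false]
      rintro ⟨h1, h2⟩
      rw [dist_comm] at h1; exact absurd h1 (not_lt.2 (h y (Metric.mem_thickening_iff.2 ⟨a, ha, h2⟩)))
    have := cond2 x a s r hs hr hdisj
    rw [add_comm] at this
    linarith
end

section
/- Let (Ω,d) be a metric space satisfying Condition 2: for all x,y ∈ Ω and r,s > 0, if the open balls B_r(x) and B_s(y) are disjoint then d(x,y) ≥ r + s. Then for every x ∈ Ω and r > 0, the closure of the open ball B_r(x) equals the closed ball B_r[x] = {y ∈ Ω | d(x,y) ≤ r}. -/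
open Metric

theorem Metric.exists_pos_inter_ball_eq_empty_of_notMem_closure {α : Type*}
    [PseudoMetricSpace α] {s : Set α} {y : α} (hy : y ∉ closure s) :
    ∃ ε > 0, s ∩ ball y ε = ∅ := by
  rw [Metric.mem_closure_iff] at hy
  push Not at hy
  obtain ⟨ε, hε, hfar⟩ := hy
  refine ⟨ε, hε, Set.eq_empty_of_forall_notMem ?_⟩
  rintro z ⟨hzs, hzy⟩
  exact (hfar z hzs).not_gt (mem_ball'.1 hzy)

/-- Under Condition 2 the closure of an open ball is the closed ball. -/
theorem closure_ball_eq_closedBall_of_cond2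
    {Ω : Type*} [MetricSpace Ω]
    (cond2 : ∀ x y : Ω, ∀ r s : ℝ, 0 < r → 0 < s →
      Metric.ball x r ∩ Metric.ball y s = ∅ → r + s ≤ dist x y)
    (x : Ω) (r : ℝ) (hr : 0 < r) :
    closure (Metric.ball x r) = Metric.closedBall x r := by
  refine closure_ball_subset_closedBall.antisymm fun y hy => ?_
  by_contra hy_not_mem
  obtain ⟨ε, hε, hdisjoint⟩ := exists_pos_inter_ball_eq_empty_of_notMem_closure hy_not_mem
  have hfar : r + ε ≤ dist x y := cond2 x y r ε hr hε hdisjoint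
  have hnear : dist x y ≤ r := mem_closedBall'.1 hy
  linarith
end

section
/- Let (Ω,d) be a proper metric space (every closed ball is compact) satisfying Condition 2: for all x,y ∈ Ω and r,s > 0, if the open balls B_r(x) and B_s(y) are disjoint then d(x,y) ≥ r + s. Let ι be a nonempty directed set and (A_α)_{α∈ι} a decreasing (antitone) family of subsets of Ω. Then for every t > 0: (⋂_α A_α)^t ⊆ ⋂_α A_α^t ⊆ closure( (⋂_α closure(A_α))^t ). -/
open Metric Filter

/-- Lemma 3 (technical): two-sided bound for intersections of thickenings of a
decreasing net of sets in a proper metric space satisfying Condition 2. -/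
theorem thickening_inter_two_sided_bound
    {Ω : Type*} [MetricSpace Ω] [ProperSpace Ω]
    (cond2 : ∀ x y : Ω, ∀ r s : ℝ, 0 < r → 0 < s →
      Metric.ball x r ∩ Metric.ball y s = ∅ → r + s ≤ dist x y)
    {ι : Type*} [Nonempty ι] [Preorder ι] [IsDirected ι (· ≤ ·)]
    (A : ι → Set Ω) (hanti : Antitone A) (t : ℝ) (ht : 0 < t) :
    Metric.thickening t (⋂ α, A α) ⊆ (⋂ α, Metric.thickening t (A α)) ∧
    (⋂ α, Metric.thickening t (A α)) ⊆
      closure (Metric.thickening t (⋂ α, closure (A α))) := by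
  constructor
  · exact Set.subset_iInter fun α =>
      Metric.thickening_subset_of_subset t (Set.iInter_subset A α)
  · intro x hx
    -- choose y α ∈ A α with dist x (y α) < t
    have hsel : ∀ α, ∃ y, y ∈ A α ∧ dist x y < t := by
      intro α
      have := Set.mem_iInter.1 hx α
      rw [Metric.mem_thickening_iff] at this
      exact this
    choose y hyA hyd using hsel
    have hFle : Filter.map y atTop ≤ Filter.principal (closedBall x t) :=
      le_principal_iff.2 (Filter.mem_map.2
        (Filter.Eventually.of_forall fun α => mem_closedBall'.2 (le_of_lt (hyd α))))
    obtain ⟨z, hz, hcl⟩ := (isCompact_closedBall x t).exists_clusterPt hFle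
    -- z ∈ closure (A α) for all α
    have hzA : ∀ α, z ∈ closure (A α) := by
      intro α
      rw [mem_closure_iff_clusterPt]
      refine hcl.mono ?_
      rw [le_principal_iff, Filter.mem_map]
      filter_upwards [Filter.Ici_mem_atTop α] with β hβ
      exact hanti hβ (hyA β)
    have hzt : dist x z ≤ t := mem_closedBall'.1 hz
    -- conclude
    rw [Metric.mem_closure_iff]
    intro ε hε
    have hball : (Metric.ball x ε ∩ Metric.ball z t).Nonempty := by
      by_contra h
      rw [Set.not_nonempty_iff_eq_empty] at h
      have := cond2 x z ε t hε ht h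
      linarith
    obtain ⟨w, hwx, hwz⟩ := hball
    refine ⟨w, ?_, mem_ball'.1 hwx⟩
    rw [Metric.mem_thickening_iff]
    exact ⟨z, Set.mem_iInter.2 hzA, mem_ball.1 hwz⟩
end

section
/- Let (Ω,d) be a proper metric space (every closed ball is compact) satisfying Condition 2: for all x,y ∈ Ω and r,s > 0, if the open balls B_r(x) and B_s(y) are disjoint then d(x,y) ≥ r + s. Let ι be a nonempty directed set and (G_α)_{α∈ι} a decreasing (antitone) family of open subsets of Ω. Define g(t) := int ⋂_α G_α^t for t > 0 and the nucleus ġ := ⋂_α closure(G_α). Then for every t > 0 one has the upper bound g(t) ⊆ int closure( (ġ)^t ). -/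
/-!
A point `x` of `⋂ α, (G α)^t` meets every `closure (G α)` within the compact `closedBall x t`;
these traces form a directed family of nonempty compact sets, so they share a point `z` of the
nucleus with `dist x z ≤ t`.
Condition 2 makes closed balls the closures of open balls, so `x ∈ closure (ball z t)`, which lies
in `closure ((ġ)^t)`. Taking interiors gives the bound.
-/

open Metric

section

open Set

variable {Ω : Type*} [PseudoMetricSpace Ω]

theorem closedBall_subset_closure_ball_of_disjoint_balls
    (hdisj : ∀ x y : Ω, ∀ r s : ℝ, 0 < r → 0 < s → ball x r ∩ ball y s = ∅ → r + s ≤ dist x y)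
    (z : Ω) {t : ℝ} (ht : 0 < t) :
    closedBall z t ⊆ closure (ball z t) := by
  intro x hx
  rw [Metric.mem_closure_iff]
  intro δ hδ
  have hmeet : (ball x δ ∩ ball z t).Nonempty := by
    refine nonempty_iff_ne_empty.2 fun hempty => ?_
    have hfar := hdisj x z δ t hδ ht hempty
    rw [mem_closedBall] at hx
    linarith
  obtain ⟨w, hwx, hwz⟩ := hmeet
  exact ⟨w, hwz, mem_ball'.1 hwx⟩

theorem cthickening_subset_closure_thickening_of_disjoint_balls [ProperSpace Ω]
    (hdisj : ∀ x y : Ω, ∀ r s : ℝ, 0 < r → 0 < s → ball x r ∩ ball y s = ∅ → r + s ≤ dist x y)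
    (E : Set Ω) {t : ℝ} (ht : 0 < t) :
    cthickening t E ⊆ closure (thickening t E) := by
  rw [cthickening_eq_biUnion_closedBall E ht.le, ← thickening_closure]
  exact iUnion₂_subset fun z hz =>
    (closedBall_subset_closure_ball_of_disjoint_balls hdisj z ht).trans
      (closure_mono (ball_subset_thickening hz t))

theorem iInter_thickening_subset_cthickening_iInter_closure [ProperSpace Ω]
    {ι : Type*} [Nonempty ι] [Preorder ι] [IsDirected ι (· ≤ ·)]
    {G : ι → Set Ω} (hG : Antitone G) (t : ℝ) :
    ⋂ α, thickening t (G α) ⊆ cthickening t (⋂ α, closure (G α)) := by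
  intro x hx
  rw [mem_iInter] at hx
  set K : ι → Set Ω := fun α => closure (G α) ∩ closedBall x t
  have hK_nonempty (α : ι) : (K α).Nonempty := by
    obtain ⟨y, hyG, hyx⟩ := mem_thickening_iff.1 (hx α)
    exact ⟨y, subset_closure hyG, mem_closedBall'.2 hyx.le⟩
  have hK_directed : Directed (· ⊇ ·) K := fun α β => by
    obtain ⟨γ, hαγ, hβγ⟩ := directed_of (· ≤ ·) α β
    exact ⟨γ, inter_subset_inter_left _ (closure_mono (hG hαγ)),
      inter_subset_inter_left _ (closure_mono (hG hβγ))⟩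
  obtain ⟨z, hz⟩ := IsCompact.nonempty_iInter_of_directed_nonempty_isCompact_isClosed K
    hK_directed hK_nonempty (fun _ => (isCompact_closedBall x t).inter_left isClosed_closure)
    (fun _ => isClosed_closure.inter isClosed_closedBall)
  rw [mem_iInter] at hz
  obtain ⟨α⟩ := ‹Nonempty ι›
  exact mem_cthickening_of_dist_le x z t _ (mem_iInter.2 fun β => (hz β).1)
    (mem_closedBall'.1 (hz α).2)

end

theorem upper_bound_via_nucleus_general
    {Ω : Type*} [MetricSpace Ω] [ProperSpace Ω]
    (cond2 : ∀ x y : Ω, ∀ r s : ℝ, 0 < r → 0 < s →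
      Metric.ball x r ∩ Metric.ball y s = ∅ → r + s ≤ dist x y)
    {ι : Type*} [Nonempty ι] [Preorder ι] [IsDirected ι (· ≤ ·)]
    (G : ι → Set Ω) (hanti : Antitone G)
    (g : ℝ → Set Ω)
    (hg : ∀ t > (0:ℝ), g t = interior (⋂ α, Metric.thickening t (G α))) :
    ∀ t > (0:ℝ),
      g t ⊆ interior (closure (Metric.thickening t (⋂ α, closure (G α)))) := by
  intro t ht
  rw [hg t ht]
  exact interior_mono <| (iInter_thickening_subset_cthickening_iInter_closure hanti t).trans
    (cthickening_subset_closure_thickening_of_disjoint_balls cond2 _ ht)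

/-- Lemma 4 (estimate from above): `g t ⊆ int closure ((ġ)^t)` where
`ġ = ⋂ α closure (G α)` is the nucleus. -/
theorem upper_bound_via_nucleus
    {Ω : Type*} [MetricSpace Ω] [ProperSpace Ω]
    (cond2 : ∀ x y : Ω, ∀ r s : ℝ, 0 < r → 0 < s →
      Metric.ball x r ∩ Metric.ball y s = ∅ → r + s ≤ dist x y)
    {ι : Type*} [Nonempty ι] [Preorder ι] [IsDirected ι (· ≤ ·)]
    (G : ι → Set Ω) (hG : ∀ α, IsOpen (G α)) (hanti : Antitone G)
    (g : ℝ → Set Ω)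
    (hg : ∀ t > (0:ℝ), g t = interior (⋂ α, Metric.thickening t (G α))) :
    ∀ t > (0:ℝ),
      g t ⊆ interior (closure (Metric.thickening t (⋂ α, closure (G α)))) :=
  upper_bound_via_nucleus_general cond2 G hanti g hg
end

section
/- Let (Ω,d) be a metric space satisfying Condition 2: for all x,y ∈ Ω and r,s > 0, if the open balls B_r(x) and B_s(y) are disjoint then d(x,y) ≥ r + s. Then for every x ∈ Ω and every t > 0, int ⋂_{ε>0} (B_ε(x))^t = int B_t[x]; that is, the decreasing net of thickenings of the balls B_ε(x) as ε → 0⁺ order-converges pointwise to the function b*[x](t) = int B_t[x], so b*[x] belongs to the order closure of the family I𝔒 = {t ↦ G^t | G open}. -/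
open Metric

/-- Lemma 5: under Condition 2, `int ⋂_{ε>0} (B_ε(x))^t = int B_t[x]`, so the
function `b*[x](t) = int B_t[x]` is the order limit of the net of thickenings of
shrinking balls, and hence belongs to the order closure of `I𝔒`. -/
theorem interior_inter_thickening_ball_eq
    {Ω : Type*} [MetricSpace Ω]
    (cond2 : ∀ x y : Ω, ∀ r s : ℝ, 0 < r → 0 < s →
      Metric.ball x r ∩ Metric.ball y s = ∅ → r + s ≤ dist x y)
    (x : Ω) (t : ℝ) (ht : 0 < t) :
    interior (⋂ ε > (0:ℝ), Metric.thickening t (Metric.ball x ε)) =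
      interior (Metric.closedBall x t) := by
  suffices h : (⋂ ε > (0:ℝ), Metric.thickening t (Metric.ball x ε)) =
      Metric.closedBall x t by rw [h]
  ext y
  rw [Set.mem_iInter₂]
  simp only [Metric.mem_thickening_iff, Metric.mem_closedBall, Metric.mem_ball]
  constructor
  · intro h
    refine le_of_forall_pos_lt_add (fun ε hε => ?_)
    obtain ⟨z, hzx, hyz⟩ := h ε hε
    calc dist y x ≤ dist y z + dist z x := dist_triangle y z x
      _ < t + ε := add_lt_add hyz hzx
  · intro h ε hε
    by_contra hc
    push_neg at hc
    have hempty : Metric.ball y t ∩ Metric.ball x ε = ∅ := by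
      ext z
      simp only [Set.mem_inter_iff, Metric.mem_ball, Set.mem_empty_iff_false,
        iff_false, not_and]
      intro hzy hzx
      have h1 := hc z hzx
      rw [dist_comm] at hzy
      linarith
    have := cond2 y x t ε ht hε hempty
    have : t + ε ≤ t := this.trans h
    linarith
end

section
/- Let (Ω,d) be a metric space satisfying Condition 2: for all x,y ∈ Ω and r,s > 0, if the open balls B_r(x) and B_s(y) are disjoint then d(x,y) ≥ r + s. Let x, y ∈ Ω and let a, b : (0,∞) → Set Ω be functions such that for all t > 0, B_t(x) ⊆ a(t) ⊆ int B_t[x] and B_t(y) ⊆ b(t) ⊆ int B_t[y]. Then 2 · inf{ t > 0 | a(t) ∩ b(t) ≠ ∅ } = d(x,y). -/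
open Metric

/-- Lemma 6: under Condition 2, for any representatives `a, b` squeezed between
open and closed balls, twice the infimum of the overlap times equals `d(x,y)`. -/
theorem wave_distance_eq_dist
    {Ω : Type*} [MetricSpace Ω]
    (cond2 : ∀ x y : Ω, ∀ r s : ℝ, 0 < r → 0 < s →
      Metric.ball x r ∩ Metric.ball y s = ∅ → r + s ≤ dist x y)
    (x y : Ω) (a b : ℝ → Set Ω)
    (ha : ∀ t > (0:ℝ), Metric.ball x t ⊆ a t ∧ a t ⊆ interior (Metric.closedBall x t))
    (hb : ∀ t > (0:ℝ), Metric.ball y t ⊆ b t ∧ b t ⊆ interior (Metric.closedBall y t)) :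
    2 * sInf {t : ℝ | 0 < t ∧ (a t ∩ b t).Nonempty} = dist x y := by
  set S : Set ℝ := {t : ℝ | 0 < t ∧ (a t ∩ b t).Nonempty} with hSdef
  have hlow : ∀ t ∈ S, dist x y / 2 ≤ t := by
    intro t ht
    obtain ⟨htpos, z, hza, hzb⟩ := ht
    have hzx : z ∈ closedBall x t := interior_subset ((ha t htpos).2 hza)
    have hzy : z ∈ closedBall y t := interior_subset ((hb t htpos).2 hzb)
    have : dist x y ≤ t + t := by
      calc dist x y ≤ dist x z + dist z y := dist_triangle x z y
        _ ≤ t + t := add_le_add (mem_closedBall'.mp hzx)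
            (by simpa [dist_comm] using (mem_closedBall.mp hzy))
    linarith
  have hmem : ∀ t : ℝ, dist x y / 2 < t → t ∈ S := by
    intro t ht
    have htpos : 0 < t := lt_of_le_of_lt (by positivity) ht
    have hball : (ball x t ∩ ball y t).Nonempty := by
      rw [Set.nonempty_iff_ne_empty]
      intro hE
      have := cond2 x y t t htpos htpos hE
      linarith
    exact ⟨htpos, hball.mono (Set.inter_subset_inter (ha t htpos).1 (hb t htpos).1)⟩
  have hbdd : BddBelow S := ⟨dist x y / 2, hlow⟩
  have hne : S.Nonempty := ⟨dist x y / 2 + 1, hmem _ (by linarith)⟩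
  have h1 : dist x y / 2 ≤ sInf S := le_csInf hne hlow
  have h2 : sInf S ≤ dist x y / 2 := by
    refine le_of_forall_pos_le_add fun ε hε => ?_
    exact csInf_le hbdd (hmem _ (by linarith))
  linarith
end
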